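/- Let G be a finite group and m > 1. The map ω: G^m → G^m defined by (g_1,...,g_m)^ω = (g_1^{-1}g_2, g_1^{-1}g_3, ..., g_1^{-1}g_m, g_1^{-1}) is an automorphism of the Cayley graph G_m(G) of order m+1. Moreover, with τ: (g_1,...,g_m) ↦ (g_m,...,g_1), one has τ ω τ = ω^{-1}, so ⟨τ, ω⟩ is isomorphic to the dihedral group of order 2(m+1) (when the actions are faithful, e.g. |G| > 2). -/
import Mathlib

namespace CayleyStmt17

variable {G : Type*}

def intvl [Group G] (m : ℕ) (x : G) (k l : ℕ) : Fin m → G :=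
  fun i => if k ≤ i.1 + 1 ∧ i.1 + 1 < l then x else 1

def cS (G : Type*) [Group G] (m : ℕ) : Set (Fin m → G) :=
  {v | ∃ (x : G) (k l : ℕ), x ≠ 1 ∧ 1 ≤ k ∧ k < l ∧ l ≤ m + 1 ∧ v = intvl m x k l}

def cAdj [Group G] (m : ℕ) (g h : Fin m → G) : Prop := h * g⁻¹ ∈ cS G m

def om [Group G] (m : ℕ) (g : Fin m → G) : Fin m → G :=
  fun j => (g ⟨0, j.pos⟩)⁻¹ * (if h : j.1 + 1 < m then g ⟨j.1 + 1, h⟩ else 1)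

def tau [Group G] (m : ℕ) (g : Fin m → G) : Fin m → G := fun j => g j.rev

section Aux
variable [Group G]

/-- extension of a vector by `1` at positions `≥ m`. -/
def gext (m : ℕ) (g : Fin m → G) (t : ℕ) : G := if h : t < m then g ⟨t, h⟩ else 1

lemma gext_lt (m : ℕ) (g : Fin m → G) {t : ℕ} (h : t < m) : gext m g t = g ⟨t, h⟩ :=
  dif_pos h

lemma gext_ge (m : ℕ) (g : Fin m → G) {t : ℕ} (h : ¬ t < m) : gext m g t = 1 :=
  dif_neg h

lemma om_eq (m : ℕ) (g : Fin m → G) (j : Fin m) :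
    om m g j = (g ⟨0, j.pos⟩)⁻¹ * gext m g (j.1 + 1) := rfl

lemma om_iter (m k : ℕ) (g : Fin m → G) :
    ∀ i : Fin m, (om m)^[k] g i
      = (gext m g ((m + k) % (m + 1)))⁻¹ * gext m g ((i.1 + k) % (m + 1)) := by
  induction k with
  | zero =>
    intro i
    have h1 : (m + 0) % (m + 1) = m := by
      simpa using Nat.mod_eq_of_lt (Nat.lt_succ_self m)
    have h2 : (i.1 + 0) % (m + 1) = i.1 := by
      simpa using Nat.mod_eq_of_lt (Nat.lt_succ_of_lt i.isLt)
    rw [h1, h2, gext_ge m g (lt_irrefl m), gext_lt m g i.isLt]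
    simp
  | succ k ih =>
    intro j
    rw [Function.iterate_succ_apply', om_eq]
    have hz : (0 : ℕ) < m := j.pos
    rw [ih ⟨0, hz⟩]
    have hmk1 : (m + (k + 1)) % (m + 1) = k % (m + 1) := by
      have : m + (k + 1) = (m + 1) + k := by omega
      rw [this, Nat.add_mod_left]
    have h0k : ((0 : ℕ) + k) % (m + 1) = k % (m + 1) := by rw [Nat.zero_add]
    by_cases hj : j.1 + 1 < m
    · rw [gext_lt m _ hj, ih ⟨j.1 + 1, hj⟩]
      have : (j.1 + 1 + k) % (m + 1) = (j.1 + (k + 1)) % (m + 1) := by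
        congr 1; omega
      rw [this, hmk1, h0k]
      group
    · rw [gext_ge m _ hj]
      have hje : j.1 + 1 = m := by omega
      have : (j.1 + (k + 1)) % (m + 1) = (m + k) % (m + 1) := by
        congr 1; omega
      rw [this, hmk1, h0k]
      group

lemma om_iter_top (m : ℕ) : (om m (G := G))^[m + 1] = id := by
  funext g
  funext i
  rw [om_iter]
  have h1 : (m + (m + 1)) % (m + 1) = m := by
    rw [Nat.add_comm m (m+1), Nat.add_mod_left, Nat.mod_eq_of_lt (Nat.lt_succ_self m)]
  have h2 : (i.1 + (m + 1)) % (m + 1) = i.1 := by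
    rw [Nat.add_mod_right, Nat.mod_eq_of_lt (Nat.lt_succ_of_lt i.isLt)]
  rw [h1, h2, gext_ge m g (lt_irrefl m), gext_lt m g i.isLt]
  simp

lemma iter_const_ne (m : ℕ) (hm : 1 < m) {x : G} (hx : x ≠ 1) {k : ℕ}
    (hk1 : 0 < k) (hk2 : k ≤ m) :
    (om m)^[k] (fun _ => x) ≠ (fun _ => x) := by
  intro heq
  set i0 : ℕ := if k = m then 1 else 0 with hi0
  have hi0m : i0 < m := by rw [hi0]; split <;> omega
  have h := congrFun heq ⟨i0, hi0m⟩
  rw [om_iter] at h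
  have h1 : (m + k) % (m + 1) = k - 1 := by
    have : m + k = (m + 1) + (k - 1) := by omega
    rw [this, Nat.add_mod_left, Nat.mod_eq_of_lt (by omega)]
  have hik : (i0 + k) % (m + 1) < m := by
    rw [hi0]
    split
    · have : 1 + k = (m + 1) + 0 := by omega
      rw [this, Nat.add_mod_left, Nat.zero_mod]; omega
    · rw [Nat.zero_add, Nat.mod_eq_of_lt (by omega)]; omega
  have hk1m : k - 1 < m := by omega
  rw [h1, gext_lt m _ hk1m, gext_lt m _ hik] at h
  simp only [inv_mul_cancel] at h
  exact hx h.symm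

lemma tau_invol (m : ℕ) : Function.Involutive (tau m (G := G)) := by
  intro g
  funext i
  simp [tau, Fin.rev_rev]

lemma tau_om_tau (m : ℕ) (hm : 0 < m) :
    (tau m (G := G)) ∘ (om m) ∘ (tau m) = (om m (G := G))^[m] := by
  funext g
  funext j
  have hLHS : ((tau m ∘ om m ∘ tau m) g) j = om m (tau m g) j.rev := rfl
  rw [hLHS, om_eq, om_iter]
  have h1 : (m + m) % (m + 1) = m - 1 := by
    have : m + m = (m + 1) + (m - 1) := by omega
    rw [this, Nat.add_mod_left, Nat.mod_eq_of_lt (by omega)]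
  have hm1 : m - 1 < m := by omega
  rw [h1, gext_lt m g hm1]
  have hrev0 : (tau m g) ⟨0, (j.rev).pos⟩ = g ⟨m - 1, hm1⟩ := by
    show g (Fin.rev ⟨0, _⟩) = _
    congr 1
  rw [hrev0]
  have hjrev : (j.rev : ℕ) = m - (j.1 + 1) := Fin.val_rev j
  congr 1
  by_cases hj : j.1 = 0
  · have hc : (j.1 + m) % (m + 1) = m := by
      rw [hj, Nat.zero_add, Nat.mod_eq_of_lt (Nat.lt_succ_self m)]
    rw [hc, gext_ge m g (lt_irrefl m), gext_ge]
    omega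
  · have hc : (j.1 + m) % (m + 1) = j.1 - 1 := by
      have : j.1 + m = (m + 1) + (j.1 - 1) := by omega
      rw [this, Nat.add_mod_left, Nat.mod_eq_of_lt (by omega)]
    have hj1 : j.1 - 1 < m := by omega
    rw [hc, gext_lt m g hj1]
    have hlt : (j.rev : ℕ) + 1 < m := by omega
    rw [gext_lt m _ hlt]
    show g (Fin.rev ⟨(j.rev : ℕ) + 1, hlt⟩) = _
    congr 1
    ext
    simp only [Fin.val_rev]
    omega

lemma conj_ne_one (a x : G) (hx : x ≠ 1) : a⁻¹ * x * a ≠ 1 := by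
  intro hc
  apply hx
  have := congrArg (fun y => a * y * a⁻¹) hc
  simpa [mul_assoc] using this

lemma adj_pres (m : ℕ) (hm : 0 < m) (g h : Fin m → G) (hadj : cAdj m g h) :
    cAdj m (om m g) (om m h) := by
  obtain ⟨x, k, l, hx, hk, hkl, hlm, hv⟩ := hadj
  have hdi : ∀ i : Fin m, h i = (if k ≤ i.1 + 1 ∧ i.1 + 1 < l then x else 1) * g i := by
    intro i
    have h1 : h i * (g i)⁻¹ = intvl m x k l i := congrFun hv i
    rw [intvl] at h1
    rw [← h1]
    group
  set g0 : G := g ⟨0, hm⟩ with hg0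
  have h0eq : h ⟨0, hm⟩ = (if k = 1 then x else 1) * g0 := by
    have h2 := hdi ⟨0, hm⟩
    rw [show ((⟨0, hm⟩ : Fin m) : ℕ) = 0 from rfl] at h2
    rw [h2]
    congr 1
    by_cases hk1 : k = 1
    · rw [if_pos hk1, if_pos (by omega)]
    · rw [if_neg hk1, if_neg (by omega)]
  have main : ∀ j : Fin m, om m h j * (om m g j)⁻¹ =
      g0⁻¹ * (if k = 1 then x else 1)⁻¹ *
        (if k ≤ j.1 + 2 ∧ j.1 + 2 < l then x else 1) * g0 := by
    intro j
    have e1 : om m h j = (h ⟨0, hm⟩)⁻¹ * gext m h (j.1 + 1) := om_eq m h j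
    have e2 : om m g j = g0⁻¹ * gext m g (j.1 + 1) := om_eq m g j
    rw [e1, e2, h0eq]
    by_cases hjm : j.1 + 1 < m
    · rw [gext_lt m h hjm, gext_lt m g hjm, hdi ⟨j.1 + 1, hjm⟩,
        show ((⟨j.1 + 1, hjm⟩ : Fin m) : ℕ) + 1 = j.1 + 2 from rfl]
      group
    · rw [gext_ge m h hjm, gext_ge m g hjm]
      have hjem : j.1 + 1 = m := by have := j.isLt; omega
      rw [if_neg (show ¬ (k ≤ j.1 + 2 ∧ j.1 + 2 < l) by omega)]
      group
  by_cases hk1 : k = 1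
  · refine ⟨g0⁻¹ * x⁻¹ * g0, l - 1, m + 1, conj_ne_one g0 x⁻¹ (by simpa using hx),
      by omega, by omega, le_refl _, funext fun j => ?_⟩
    have : (om m h * (om m g)⁻¹) j = om m h j * (om m g j)⁻¹ := rfl
    rw [this, main j, if_pos hk1]
    simp only [intvl]
    by_cases hc : j.1 + 2 < l
    · rw [if_pos (by omega), if_neg (by omega)]
      group
    · rw [if_neg (by omega), if_pos (by refine ⟨by omega, by omega⟩)]
      group
  · refine ⟨g0⁻¹ * x * g0, k - 1, l - 1, conj_ne_one g0 x hx,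
      by omega, by omega, by omega, funext fun j => ?_⟩
    have : (om m h * (om m g)⁻¹) j = om m h j * (om m g j)⁻¹ := rfl
    rw [this, main j, if_neg hk1]
    simp only [intvl]
    by_cases hc : k ≤ j.1 + 2 ∧ j.1 + 2 < l
    · rw [if_pos hc, if_pos (by omega)]
      group
    · rw [if_neg hc, if_neg (by omega)]
      group

def omPerm (m : ℕ) : Equiv.Perm (Fin m → G) where
  toFun := om m
  invFun := (om m)^[m]
  left_inv := fun g => by
    have := congrFun (om_iter_top (G := G) m) g
    rwa [Function.iterate_succ_apply] at this
  right_inv := fun g => by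
    have := congrFun (om_iter_top (G := G) m) g
    rwa [Function.iterate_succ_apply'] at this

lemma omPerm_coe (m : ℕ) : ⇑(omPerm (G := G) m) = om m := rfl

def tauPerm (m : ℕ) : Equiv.Perm (Fin m → G) := (tau_invol m).toPerm

lemma tauPerm_coe (m : ℕ) : ⇑(tauPerm (G := G) m) = tau m := rfl

lemma omPerm_pow (m k : ℕ) : ⇑(omPerm (G := G) m ^ k) = (om m (G := G))^[k] := by
  rw [Equiv.Perm.coe_pow]; rfl

lemma omPerm_order (m : ℕ) : (omPerm (G := G) m) ^ (m + 1) = 1 := by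
  apply Equiv.ext
  intro g
  have h := congrFun (om_iter_top (G := G) m) g
  have h2 := congrFun (omPerm_pow (G := G) m (m + 1)) g
  simp only [Equiv.Perm.coe_one, id_eq]
  rw [h2, h]
  rfl

lemma tau_om_tau_perm (m : ℕ) (hm : 0 < m) :
    tauPerm m * omPerm m * tauPerm m = (omPerm (G := G) m) ^ m := by
  apply Equiv.ext
  intro g
  have h := congrFun (tau_om_tau (G := G) m hm) g
  have h2 := congrFun (omPerm_pow (G := G) m m) g
  show tau m (om m (tau m g)) = _
  rw [h2, ← h]
  rfl

lemma tauPerm_sq (m : ℕ) : tauPerm (G := G) m * tauPerm m = 1 := by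
  apply Equiv.ext
  intro g
  exact tau_invol m g

end Aux

/-- `ω` is an automorphism of `Cay(G^m, S)` of order `m+1`, `τ ω τ = ω⁻¹`, and
`⟨τ, ω⟩` is isomorphic to the dihedral group of order `2(m+1)`. -/
theorem omega_dihedral [Group G] [Fintype G] (m : ℕ) (hm : 1 < m)
    (hG : 2 < Fintype.card G) :
    (∀ g h : Fin m → G, cAdj m g h → cAdj m (om m g) (om m h)) ∧
    (om m (G := G))^[m + 1] = id ∧
    (∀ k : ℕ, 0 < k → k ≤ m → (om m (G := G))^[k] ≠ id) ∧
    (tau m (G := G)) ∘ (om m) ∘ (tau m) = (om m (G := G))^[m] ∧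
    (∃ ρ : DihedralGroup (m + 1) →* Equiv.Perm (Fin m → G),
      Function.Injective ρ ∧
      ⇑(ρ (DihedralGroup.r 1)) = om m (G := G) ∧
      ⇑(ρ (DihedralGroup.sr 0)) = tau m (G := G)) := by
  have hm0 : 0 < m := by omega
  have hnt : Nontrivial G := Fintype.one_lt_card_iff_nontrivial.mp (by omega)
  obtain ⟨x, hx⟩ := exists_ne (1 : G)
  have part3 : ∀ k : ℕ, 0 < k → k ≤ m → (om m (G := G))^[k] ≠ id := by
    intro k hk1 hk2 heq
    exact iter_const_ne m hm hx hk1 hk2 (by rw [heq]; rfl)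
  have tau_ne : ∀ c : ℕ, c ≤ m → tau m (G := G) ≠ (om m)^[c] := by
    intro c hc hcontra
    rcases Nat.eq_zero_or_pos c with h0 | hpos
    · subst h0
      have h2 := congrFun (congrFun hcontra (fun i : Fin m => if i.1 = 0 then x else 1)) ⟨0, hm0⟩
      have hrev : (Fin.rev (⟨0, hm0⟩ : Fin m)).1 = m - 1 := by
        simp [Fin.val_rev]
      have hL : tau m (fun i : Fin m => if i.1 = 0 then x else 1) ⟨0, hm0⟩ = 1 := by
        show (if (Fin.rev (⟨0, hm0⟩ : Fin m)).1 = 0 then x else 1) = 1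
        rw [if_neg (by omega)]
      have hR : ((om m (G := G))^[0] (fun i : Fin m => if i.1 = 0 then x else 1)) ⟨0, hm0⟩
          = x := by
        simp
      rw [hL, hR] at h2
      exact hx h2.symm
    · apply iter_const_ne m hm hx hpos hc
      rw [← hcontra]
      funext i
      rfl
  set Ω := omPerm (G := G) m with hΩdef
  set T := tauPerm (G := G) m with hTdef
  have hΩtop : Ω ^ (m + 1) = 1 := omPerm_order m
  have hT2 : T * T = 1 := tauPerm_sq m
  have hTinv : T⁻¹ = T := by
    rw [← mul_eq_one_iff_inv_eq]
    exact hT2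
  have hconj1 : T * Ω * T⁻¹ = Ω⁻¹ := by
    rw [hTinv, tau_om_tau_perm m hm0]
    apply eq_inv_of_mul_eq_one_left
    rw [← pow_succ]
    exact hΩtop
  haveI : NeZero (m + 1) := ⟨Nat.succ_ne_zero m⟩
  have hpow_mod : ∀ a : ℕ, Ω ^ a = Ω ^ (a % (m + 1)) := fun a => pow_eq_pow_mod a hΩtop
  have hadd : ∀ i j : ZMod (m + 1), Ω ^ (i + j).val = Ω ^ i.val * Ω ^ j.val := by
    intro i j
    rw [ZMod.val_add, ← pow_add, ← hpow_mod]
  have hconjn : ∀ a : ℕ, T * Ω ^ a * T = (Ω ^ a)⁻¹ := by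
    intro a
    calc T * Ω ^ a * T = T * Ω ^ a * T⁻¹ := by rw [hTinv]
      _ = (T * Ω * T⁻¹) ^ a := (conj_pow).symm
      _ = (Ω⁻¹) ^ a := by rw [hconj1]
      _ = (Ω ^ a)⁻¹ := inv_pow Ω a
  have hneg : ∀ i : ZMod (m + 1), Ω ^ (-i).val = (Ω ^ i.val)⁻¹ := by
    intro i
    have h2 : Ω ^ (-i + i).val = Ω ^ (-i).val * Ω ^ i.val := hadd _ _
    rw [neg_add_cancel, ZMod.val_zero, pow_zero] at h2
    exact eq_inv_of_mul_eq_one_left h2.symm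
  have hswap2 : ∀ a : ℕ, Ω ^ a * T = T * (Ω ^ a)⁻¹ := by
    intro a
    have h := hconjn a
    calc Ω ^ a * T = T * (T * Ω ^ a * T) := by
          rw [← mul_assoc, ← mul_assoc, hT2, one_mul]
      _ = T * (Ω ^ a)⁻¹ := by rw [h]
  let f : DihedralGroup (m + 1) → Equiv.Perm (Fin m → G) := fun d =>
    match d with
    | .r i => Ω ^ i.val
    | .sr i => T * Ω ^ i.val
  have hmul : ∀ a b, f (a * b) = f a * f b := by
    rintro (i | i) (j | j)
    · rw [DihedralGroup.r_mul_r]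
      exact hadd i j
    · rw [DihedralGroup.r_mul_sr]
      show T * Ω ^ (j - i).val = Ω ^ i.val * (T * Ω ^ j.val)
      rw [sub_eq_neg_add, hadd, hneg,
        show Ω ^ i.val * (T * Ω ^ j.val) = (Ω ^ i.val * T) * Ω ^ j.val from by group,
        hswap2]
      group
    · rw [DihedralGroup.sr_mul_r]
      show T * Ω ^ (i + j).val = (T * Ω ^ i.val) * Ω ^ j.val
      rw [hadd]
      group
    · rw [DihedralGroup.sr_mul_sr]
      show Ω ^ (j - i).val = (T * Ω ^ i.val) * (T * Ω ^ j.val)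
      rw [sub_eq_neg_add, hadd, hneg,
        show (T * Ω ^ i.val) * (T * Ω ^ j.val) = T * (Ω ^ i.val * T) * Ω ^ j.val from by group,
        hswap2,
        show T * (T * (Ω ^ i.val)⁻¹) * Ω ^ j.val = (T * T) * ((Ω ^ i.val)⁻¹ * Ω ^ j.val) from by
          group,
        hT2, one_mul]
  let ρ : DihedralGroup (m + 1) →* Equiv.Perm (Fin m → G) := MonoidHom.mk' f hmul
  have hinj : Function.Injective ρ := by
    rw [injective_iff_map_eq_one]
    rintro (i | i) hone
    · have hone' : Ω ^ i.val = 1 := hone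
      have hi0 : i = 0 := by
        by_contra hi0
        have hv : i.val ≠ 0 := fun hv => hi0 (by rwa [← ZMod.val_eq_zero])
        have hvm : i.val ≤ m := by have := ZMod.val_lt i; omega
        apply part3 i.val (by omega) hvm
        rw [← omPerm_pow, ← hΩdef, hone']
        rfl
      rw [hi0]
      rfl
    · exfalso
      have hone' : T * Ω ^ i.val = 1 := hone
      have hT : T = Ω ^ (-i).val := by
        rw [hneg]
        exact eq_inv_of_mul_eq_one_left hone'
      apply tau_ne (-i).val (by have := ZMod.val_lt (-i); omega)
      rw [← omPerm_pow, ← hΩdef, ← hT]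
      rfl
  haveI : Fact (1 < m + 1) := ⟨by omega⟩
  refine ⟨fun g h => adj_pres m hm0 g h, om_iter_top m, part3, tau_om_tau m hm0,
    ρ, hinj, ?_, ?_⟩
  · show ⇑(Ω ^ (1 : ZMod (m + 1)).val) = om m
    rw [ZMod.val_one, pow_one]
    rfl
  · show ⇑(T * Ω ^ (0 : ZMod (m + 1)).val) = tau m
    rw [ZMod.val_zero, pow_zero, mul_one]
    rfl

end CayleyStmt17
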